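/- The equation u_{tx} = f(u)·u_t·u_x (the canonical equation (d1) invariant under a direct sum of two Witt algebras) is linearizable to the wave equation: let f : ℝ → ℝ be C^∞, set F(s) = ∫₀^s f(r) dr and U(s) = ∫₀^s e^{−F(r)} dr. If u : ℝ² → ℝ is a C^∞ solution of u_{tx} = f(u)·u_t·u_x, then the function v = U ∘ u satisfies v_{tx} = 0 on ℝ². -/

import Mathlib

/-!
If `U' = e^{-F}` and `F' = f`, the chain and product rules give
`(U ∘ u)_{tx} = e^{-F(u)} (u_{tx} - f(u) u_t u_x)`, which vanishes exactly when `u` solves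
`u_{tx} = f(u) u_t u_x`.
-/

open Real

section MixedChainRule

variable {u : ℝ × ℝ → ℝ} {t x : ℝ}

theorem deriv_deriv_comp_of_differentiableAt {Φ φ ψ : ℝ → ℝ} (hΦ : ∀ s, HasDerivAt Φ (φ s) s)
    (hφ : ∀ s, HasDerivAt φ (ψ s) s)
    (hux : ∀ s, DifferentiableAt ℝ (fun y => u (s, y)) x)
    (hut : DifferentiableAt ℝ (fun s => u (s, x)) t)
    (hutx : DifferentiableAt ℝ (fun s => deriv (fun y => u (s, y)) x) t) :
    deriv (fun s => deriv (fun y => Φ (u (s, y))) x) t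
      = ψ (u (t, x)) * deriv (fun s => u (s, x)) t * deriv (fun y => u (t, y)) x
        + φ (u (t, x)) * deriv (fun s => deriv (fun y => u (s, y)) x) t := by
  have hinner : (fun s => deriv (fun y => Φ (u (s, y))) x)
      = fun s => φ (u (s, x)) * deriv (fun y => u (s, y)) x :=
    funext fun s => ((hΦ _).comp x (hux s).hasDerivAt).deriv
  rw [hinner]
  exact (((hφ _).comp t hut.hasDerivAt).mul hutx.hasDerivAt).deriv

theorem ContDiff.differentiableAt_slice_fst (hu : ContDiff ℝ 1 u) :
    DifferentiableAt ℝ (fun s => u (s, x)) t :=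
  (hu.differentiable_one _).comp t (by fun_prop)

theorem ContDiff.differentiableAt_slice_snd (hu : ContDiff ℝ 1 u) :
    DifferentiableAt ℝ (fun y => u (t, y)) x :=
  (hu.differentiable_one _).comp x (by fun_prop)

theorem ContDiff.differentiableAt_deriv_slice_snd (hu : ContDiff ℝ 2 u) :
    DifferentiableAt ℝ (fun s => deriv (fun y => u (s, y)) x) t := by
  have hpartial : (fun s => deriv (fun y => u (s, y)) x) = fun s => fderiv ℝ u (s, x) (0, 1) := by
    funext s
    have hline : HasDerivAt (fun y : ℝ => ((s, y) : ℝ × ℝ)) (0, 1) x :=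
      (hasDerivAt_const x s).prodMk (hasDerivAt_id x)
    exact ((hu.differentiable (by simp) _).hasFDerivAt.comp_hasDerivAt x hline).deriv
  rw [hpartial]
  have hfderiv : ContDiff ℝ 1 (fun p => fderiv ℝ u p (0, 1)) :=
    (hu.fderiv_right (by norm_num)).clm_apply contDiff_const
  exact (hfderiv.differentiable_one _).comp t (by fun_prop)

theorem ContDiff.deriv_deriv_comp {Φ φ ψ : ℝ → ℝ} (hΦ : ∀ s, HasDerivAt Φ (φ s) s)
    (hφ : ∀ s, HasDerivAt φ (ψ s) s) (hu : ContDiff ℝ 2 u) :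
    deriv (fun s => deriv (fun y => Φ (u (s, y))) x) t
      = ψ (u (t, x)) * deriv (fun s => u (s, x)) t * deriv (fun y => u (t, y)) x
        + φ (u (t, x)) * deriv (fun s => deriv (fun y => u (s, y)) x) t :=
  have hu1 : ContDiff ℝ 1 u := hu.of_le (by norm_num)
  deriv_deriv_comp_of_differentiableAt hΦ hφ (fun _ => hu1.differentiableAt_slice_snd)
    hu1.differentiableAt_slice_fst hu.differentiableAt_deriv_slice_snd

end MixedChainRule

theorem d1_linearizable (f : ℝ → ℝ) (hf : ContDiff ℝ (⊤ : ℕ∞) f)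
    (F : ℝ → ℝ) (hF : F = fun s => ∫ r in (0 : ℝ)..s, f r)
    (U : ℝ → ℝ) (hU : U = fun s => ∫ r in (0 : ℝ)..s, Real.exp (-F r))
    (u : ℝ × ℝ → ℝ) (hu : ContDiff ℝ (⊤ : ℕ∞) u)
    (heq : ∀ t x : ℝ,
      deriv (fun s => deriv (fun y => u (s, y)) x) t
        = f (u (t, x)) * deriv (fun s => u (s, x)) t * deriv (fun y => u (t, y)) x) :
    ∀ t x : ℝ, deriv (fun s => deriv (fun y => U (u (s, y))) x) t = 0 := by
  intro t x
  have hF' : ∀ s, HasDerivAt F (f s) s := fun s => by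
    rw [hF]
    exact (hf.continuous.integral_hasStrictDerivAt 0 s).hasDerivAt
  have hFc : Continuous F := continuous_iff_continuousAt.2 fun s => (hF' s).continuousAt
  have hU' : ∀ s, HasDerivAt U (exp (-F s)) s := fun s => by
    rw [hU]
    exact ((continuous_exp.comp hFc.neg).integral_hasStrictDerivAt 0 s).hasDerivAt
  have hexp' : ∀ s, HasDerivAt (fun r => exp (-F r)) (exp (-F s) * -f s) s :=
    fun s => (hF' s).neg.exp
  rw [(hu.of_le (by norm_cast)).deriv_deriv_comp hU' hexp', heq]
  ring
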